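/- The space of vector polynomials of degree at most k−1 in d variables admits the direct sum decomposition P_{k-1}(T; ℝ^d) = ∇P_k(T) ⊕ P_{k-2}(T; 𝕂)x, where P_{k-2}(T; 𝕂)x = {τ(x)x : τ ∈ P_{k-2}(T; 𝕂)}. -/

import Mathlib

/-!
The Euler operator `E = ∑ᵢ Xᵢ ∂ᵢ` multiplies `X^μ` by `|μ|`, so `E + c` is inverted coefficientwise
by `degScale c`. With the Koszul field `κv = ∑ᵢ Xᵢ vᵢ` and `(curl v)ⱼᵢ = ∂ᵢvⱼ - ∂ⱼvᵢ` one has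
`∂ⱼ(κv) + ∑ᵢ (curl v)ⱼᵢ Xᵢ = (E + 1) vⱼ`. As `∂ⱼ` lowers and `· * Xᵢ` raises degrees by one,
`∂ⱼ ∘ E⁻¹ = (E + 1)⁻¹ ∘ ∂ⱼ` and `(E + 2)⁻¹(·) * Xᵢ = (E + 1)⁻¹(· * Xᵢ)`, whence
`v = ∇(E⁻¹ κv) + ((E + 2)⁻¹ curl v) X` with `(E + 2)⁻¹ curl v` antisymmetric.
The sum is direct: if `∇q = τX` with `τ` antisymmetric, then `Eq = Xᵀ τ X = 0`, so `q` is constant.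
-/

open MvPolynomial

theorem Finsupp.degree_sub_single_one_add_one {σ : Type*} {μ : σ →₀ ℕ} {i : σ} (hi : μ i ≠ 0) :
    (μ - Finsupp.single i 1).degree + 1 = μ.degree := by
  have hle : Finsupp.single i 1 ≤ μ := by rwa [Finsupp.single_le_iff, Nat.one_le_iff_ne_zero]
  conv_rhs => rw [← tsub_add_cancel_of_le hle]
  rw [map_add, Finsupp.degree_single]

open Matrix in
theorem Matrix.dotProduct_mulVec_self_eq_zero {ι R : Type*} [Fintype ι] [CommRing R]
    [IsAddTorsionFree R] (x : ι → R) (τ : Matrix ι ι R) (hτ : ∀ i j, τ j i = -τ i j) :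
    x ⬝ᵥ τ *ᵥ x = 0 := by
  refine self_eq_neg.mp ?_
  calc x ⬝ᵥ τ *ᵥ x = ∑ i, ∑ j, τ j i * x i * x j := by
        simp only [dotProduct, mulVec, Finset.mul_sum]
        rw [Finset.sum_comm]
        simp_rw [mul_comm (x _)]
    _ = -(x ⬝ᵥ τ *ᵥ x) := by
        simp only [dotProduct, mulVec, Finset.mul_sum, ← Finset.sum_neg_distrib]
        exact Finset.sum_congr rfl fun i _ => Finset.sum_congr rfl fun j _ => by rw [hτ]; ring

namespace MvPolynomial

section CommSemiring

variable {σ R : Type*} [CommSemiring R]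

theorem totalDegree_pderiv_le (i : σ) (p : MvPolynomial σ R) :
    (pderiv i p).totalDegree ≤ p.totalDegree - 1 := by
  refine Finset.sup_le fun ν hν => ?_
  rw [mem_support_iff, coeff_pderiv] at hν
  have h := le_totalDegree (mem_support_iff.mpr (left_ne_zero_of_mul hν))
  change (ν + Finsupp.single i 1).degree ≤ _ at h
  change ν.degree ≤ _
  rw [map_add, Finsupp.degree_single] at h
  omega

theorem coeff_X_mul_pderiv (i : σ) (p : MvPolynomial σ R) (μ : σ →₀ ℕ) :
    coeff μ (X i * pderiv i p) = μ i * coeff μ p := by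
  induction p using MvPolynomial.induction_on' with
  | add p q hp hq => rw [map_add, mul_add, coeff_add, hp, hq, coeff_add, mul_add]
  | monomial m r =>
    classical
    rw [X_mul_pderiv_monomial, coeff_smul, coeff_monomial]
    split_ifs with h
    · rw [h, nsmul_eq_mul]
    · rw [smul_zero, mul_zero]

variable [Fintype σ]

noncomputable def euler (p : MvPolynomial σ R) : MvPolynomial σ R :=
  ∑ i, X i * pderiv i p

theorem coeff_euler (p : MvPolynomial σ R) (μ : σ →₀ ℕ) :
    coeff μ (euler p) = μ.degree * coeff μ p := by
  simp only [euler, coeff_sum, coeff_X_mul_pderiv, ← Finset.sum_mul, Finsupp.degree_eq_sum,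
    Nat.cast_sum]

noncomputable def koszul (v : σ → MvPolynomial σ R) : MvPolynomial σ R :=
  ∑ i, X i * v i

theorem totalDegree_koszul_le [Nontrivial R] {v : σ → MvPolynomial σ R} {n : ℕ}
    (hv : ∀ i, (v i).totalDegree ≤ n) : (koszul v).totalDegree ≤ n + 1 :=
  totalDegree_finsetSum_le fun i _ =>
    (totalDegree_mul _ _).trans (by have := totalDegree_X (R := R) i; have := hv i; omega)

end CommSemiring

section CommRing

variable {σ R : Type*} [CommRing R]

noncomputable def curl (v : σ → MvPolynomial σ R) (j i : σ) : MvPolynomial σ R :=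
  pderiv i (v j) - pderiv j (v i)

theorem curl_swap (v : σ → MvPolynomial σ R) (i j : σ) : curl v i j = -curl v j i :=
  (neg_sub _ _).symm

theorem totalDegree_curl_le {v : σ → MvPolynomial σ R} {n : ℕ}
    (hv : ∀ i, (v i).totalDegree ≤ n) (j i : σ) : (curl v j i).totalDegree ≤ n - 1 :=
  (totalDegree_sub _ _).trans <| max_le
    ((totalDegree_pderiv_le i (v j)).trans (Nat.sub_le_sub_right (hv j) 1))
    ((totalDegree_pderiv_le j (v i)).trans (Nat.sub_le_sub_right (hv i) 1))

theorem pderiv_koszul_add_sum_curl_mul_X [Fintype σ] (v : σ → MvPolynomial σ R) (j : σ) :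
    pderiv j (koszul v) + ∑ i, curl v j i * X i = euler (v j) + v j := by
  classical
  simp only [koszul, curl, euler, map_sum, Derivation.leibniz, pderiv_X, smul_eq_mul,
    Finset.sum_add_distrib, sub_mul, Finset.sum_sub_distrib, Pi.single_apply, mul_ite, mul_one,
    mul_zero, Finset.sum_ite_eq', Finset.mem_univ, if_true, mul_comm (pderiv _ _) (X _)]
  abel

end CommRing

section Field

variable {σ K : Type*} [Field K]

theorem coeff_sum_monomial_coeff_mul (p : MvPolynomial σ K) (f : (σ →₀ ℕ) → K) (ν : σ →₀ ℕ) :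
    coeff ν (∑ μ ∈ p.support, monomial μ (coeff μ p * f μ)) = coeff ν p * f ν := by
  classical
  simp only [coeff_sum, coeff_monomial, Finset.sum_ite_eq', mem_support_iff, ite_not]
  split_ifs with h <;> simp [h]

/-- The inverse of `euler + c` (see `degScale_euler_add_nsmul`); for `c = 0` it sends the
constant term to `0`, because `(0 : K)⁻¹ = 0`. -/
noncomputable def degScale (c : ℕ) : MvPolynomial σ K →ₗ[K] MvPolynomial σ K where
  toFun p := ∑ μ ∈ p.support, monomial μ (coeff μ p * ((μ.degree + c : ℕ) : K)⁻¹)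
  map_add' p q := by
    ext
    rw [coeff_add, coeff_sum_monomial_coeff_mul (p + q), coeff_sum_monomial_coeff_mul,
      coeff_sum_monomial_coeff_mul, coeff_add, add_mul]
  map_smul' a p := by
    ext
    rw [RingHom.id_apply, coeff_smul, coeff_sum_monomial_coeff_mul (a • p),
      coeff_sum_monomial_coeff_mul, coeff_smul, smul_eq_mul, smul_eq_mul, mul_assoc]

theorem coeff_degScale (c : ℕ) (p : MvPolynomial σ K) (ν : σ →₀ ℕ) :
    coeff ν (degScale c p) = coeff ν p * ((ν.degree + c : ℕ) : K)⁻¹ :=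
  coeff_sum_monomial_coeff_mul _ _ _

theorem totalDegree_degScale_le (c : ℕ) (p : MvPolynomial σ K) :
    (degScale c p).totalDegree ≤ p.totalDegree := by
  refine totalDegree_le_of_support_subset fun ν hν => ?_
  rw [mem_support_iff, coeff_degScale] at hν
  exact mem_support_iff.mpr (left_ne_zero_of_mul hν)

theorem pderiv_degScale (c : ℕ) (i : σ) (p : MvPolynomial σ K) :
    pderiv i (degScale c p) = degScale (c + 1) (pderiv i p) := by
  ext ν
  rw [coeff_pderiv, coeff_degScale, coeff_degScale, coeff_pderiv, map_add, Finsupp.degree_single,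
    add_right_comm, add_assoc, mul_right_comm]

theorem degScale_mul_X (c : ℕ) (i : σ) (p : MvPolynomial σ K) :
    degScale (c + 1) p * X i = degScale c (p * X i) := by
  classical
  ext μ
  rw [coeff_mul_X', coeff_degScale, coeff_degScale, coeff_mul_X']
  split_ifs with hi
  · rw [← Finsupp.degree_sub_single_one_add_one (Finsupp.mem_support_iff.mp hi),
      add_right_comm, add_assoc]
  · rw [zero_mul]

variable [CharZero K] [Fintype σ]

theorem degScale_euler_add_nsmul {c : ℕ} (hc : c ≠ 0) (p : MvPolynomial σ K) :
    degScale c (euler p + c • p) = p := by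
  ext ν
  have hν : ((ν.degree + c : ℕ) : K) ≠ 0 := Nat.cast_ne_zero.mpr (by omega)
  rw [coeff_degScale, coeff_add, coeff_euler, coeff_smul, nsmul_eq_mul, ← add_mul, ← Nat.cast_add]
  field_simp

theorem pderiv_eq_zero_of_euler_eq_zero {q : MvPolynomial σ K} (hq : euler q = 0) (i : σ) :
    pderiv i q = 0 := by
  ext ν
  have hdeg : (ν + Finsupp.single i 1).degree ≠ 0 := by
    rw [map_add, Finsupp.degree_single]; omega
  have hcoeff := congrArg (coeff (ν + Finsupp.single i 1)) hq
  rw [coeff_euler, coeff_zero, mul_eq_zero, Nat.cast_eq_zero] at hcoeff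
  rw [coeff_pderiv, coeff_zero, hcoeff.resolve_left hdeg, zero_mul]

theorem pderiv_eq_zero_of_pderiv_eq_antisymm_mul_X {q : MvPolynomial σ K}
    (τ : Matrix σ σ (MvPolynomial σ K)) (hτ : ∀ i j, τ j i = -τ i j)
    (hq : ∀ j, pderiv j q = ∑ i, τ j i * X i) (j : σ) : pderiv j q = 0 := by
  refine pderiv_eq_zero_of_euler_eq_zero ?_ j
  simp only [euler, hq]
  exact Matrix.dotProduct_mulVec_self_eq_zero X τ hτ

theorem pderiv_eq_of_pderiv_add_antisymm_mul_X_eq {q q' : MvPolynomial σ K}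
    {τ τ' : Matrix σ σ (MvPolynomial σ K)} (hτ : ∀ i j, τ j i = -τ i j)
    (hτ' : ∀ i j, τ' j i = -τ' i j)
    (h : ∀ j, pderiv j q + ∑ i, τ j i * X i = pderiv j q' + ∑ i, τ' j i * X i) (j : σ) :
    pderiv j q = pderiv j q' := by
  have hdiff : ∀ j, pderiv j (q - q') = ∑ i, (τ' - τ) j i * X i := fun j => by
    simp only [map_sub, Matrix.sub_apply, sub_mul, Finset.sum_sub_distrib]
    linear_combination h j
  have hanti : ∀ i j, (τ' - τ) j i = -(τ' - τ) i j := fun i j => by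
    rw [Matrix.sub_apply, Matrix.sub_apply, hτ, hτ', neg_sub_neg, neg_sub]
  rw [← sub_eq_zero, ← map_sub]
  exact pderiv_eq_zero_of_pderiv_eq_antisymm_mul_X _ hanti hdiff j

theorem pderiv_degScale_koszul_add_sum_degScale_curl_mul_X (v : σ → MvPolynomial σ K) (j : σ) :
    pderiv j (degScale 0 (koszul v)) + ∑ i, degScale 2 (curl v j i) * X i = v j :=
  calc _ = degScale 1 (pderiv j (koszul v) + ∑ i, curl v j i * X i) := by
        simp only [pderiv_degScale, map_add, map_sum, ← degScale_mul_X]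
    _ = v j := by
        rw [pderiv_koszul_add_sum_curl_mul_X]
        simpa only [one_smul] using degScale_euler_add_nsmul one_ne_zero (v j)

end Field

end MvPolynomial

/-- Direct sum decomposition
`P_{k-1}(T; ℝ^d) = ∇P_k(T) ⊕ P_{k-2}(T; 𝕂)x`:
every vector polynomial `v` of degree `≤ k−1` is uniquely the sum of a gradient
`∇q` with `q ∈ P_k(T)` and a field `τ(x)x` with `τ ∈ P_{k-2}(T; 𝕂)`
antisymmetric-matrix-valued of degree `≤ k−2`. -/
theorem grad_oplus_antisym_x_decomposition (d k : ℕ) (hk : 1 ≤ k)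
    (v : Fin d → MvPolynomial (Fin d) ℝ)
    (hv : ∀ j, (v j).totalDegree ≤ k - 1) :
    ∃! gw : (Fin d → MvPolynomial (Fin d) ℝ) × (Fin d → MvPolynomial (Fin d) ℝ),
      (∃ q : MvPolynomial (Fin d) ℝ, q.totalDegree ≤ k ∧ ∀ j, gw.1 j = pderiv j q) ∧
      (∃ τ : Matrix (Fin d) (Fin d) (MvPolynomial (Fin d) ℝ),
        (∀ i j, (τ i j).totalDegree ≤ k - 2) ∧ (∀ i j, τ j i = - τ i j) ∧
        ∀ j, gw.2 j = ∑ i : Fin d, τ j i * X i) ∧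
      v = gw.1 + gw.2 := by
  set q₀ := degScale 0 (koszul v)
  set τ₀ : Matrix (Fin d) (Fin d) (MvPolynomial (Fin d) ℝ) := fun j i => degScale 2 (curl v j i)
  have hτ₀ : ∀ i j, τ₀ j i = -τ₀ i j := fun i j => by simp only [τ₀, curl_swap v j i, map_neg]
  have hv₀ : ∀ j, v j = pderiv j q₀ + ∑ i, τ₀ j i * X i := fun j =>
    (pderiv_degScale_koszul_add_sum_degScale_curl_mul_X v j).symm
  refine ⟨(fun j => pderiv j q₀, fun j => ∑ i, τ₀ j i * X i),
    ⟨⟨q₀, ?_, fun _ => rfl⟩, ⟨τ₀, fun i j => ?_, hτ₀, fun _ => rfl⟩, funext hv₀⟩, ?_⟩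
  · have := totalDegree_koszul_le hv
    exact (totalDegree_degScale_le _ _).trans (by omega)
  · have := totalDegree_curl_le hv i j
    exact (totalDegree_degScale_le _ _).trans (by omega)
  rintro ⟨g, w⟩ ⟨⟨q, -, hg : ∀ j, g j = pderiv j q⟩,
    ⟨τ, -, hτ, hw : ∀ j, w j = ∑ i, τ j i * X i⟩, hvgw : v = g + w⟩
  have hsum : ∀ j, pderiv j q + ∑ i, τ j i * X i = pderiv j q₀ + ∑ i, τ₀ j i * X i := fun j => by
    rw [← hg, ← hw, ← hv₀, hvgw, Pi.add_apply]
  have hg₀ : ∀ j, g j = pderiv j q₀ := fun j =>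
    (hg j).trans (pderiv_eq_of_pderiv_add_antisymm_mul_X_eq hτ hτ₀ hsum j)
  refine Prod.ext (funext hg₀) (funext fun j => add_left_cancel (a := g j) ?_)
  rw [← Pi.add_apply g w, ← hvgw, hv₀, hg₀]
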